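/- arXiv:2201.02720 — 6 statements merged into one kernel-verified Lean document; each statement's English description precedes it below -/
import Mathlib

section
/- Let M be a real symmetric n×n matrix and u, v distinct indices such that e_u - e_v is an eigenvector of M. Then for all real t, |U(t)_{u,u}| + |U(t)_{u,v}| ≥ 1, where U(t) = exp(itM). -/
open Matrix Complex

/-!
The vector `e_u - e_v` is an eigenvector of `M` with eigenvalue `θ`, hence of `U(t) = exp(itM)`
with eigenvalue `e^{iθt}`. Its `u`-th coordinate gives `U(t)_{uu} - U(t)_{uv} = e^{iθt}`, a number
of modulus one, and the triangle inequality concludes.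
-/

/-- The continuous-time quantum walk transition matrix `U(t) = exp(i t M)`. -/
noncomputable def transU {n : ℕ} (M : Matrix (Fin n) (Fin n) ℝ) (t : ℝ) :
    Matrix (Fin n) (Fin n) ℂ :=
  NormedSpace.exp ((Complex.I * (t : ℂ)) • M.map (fun x => (x : ℂ)))

namespace Matrix

variable {m R 𝕂 : Type*} [Fintype m] [DecidableEq m]

theorem pow_mulVec_of_mulVec_eq_smul [CommSemiring R] {A : Matrix m m R} {w : m → R} {c : R}
    (h : A *ᵥ w = c • w) (k : ℕ) : A ^ k *ᵥ w = c ^ k • w := by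
  induction k with
  | zero => simp
  | succ k ih => rw [pow_succ, ← mulVec_mulVec, h, mulVec_smul, ih, smul_smul, pow_succ']

theorem exp_mulVec_of_mulVec_eq_smul [RCLike 𝕂] {A : Matrix m m 𝕂} {w : m → 𝕂} {c : 𝕂}
    (h : A *ᵥ w = c • w) : NormedSpace.exp A *ᵥ w = NormedSpace.exp c • w := by
  open scoped Norms.Operator in
  have hA := (NormedSpace.exp_series_hasSum_exp' (𝕂 := 𝕂) A).map
    (mulVec.addMonoidHomLeft w) (continuous_id.matrix_mulVec continuous_const)
  refine hA.unique ?_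
  convert (NormedSpace.exp_series_hasSum_exp' (𝕂 := 𝕂) c).smul_const w using 2 with k
  change (_ • A ^ k) *ᵥ w = _
  rw [smul_mulVec, pow_mulVec_of_mulVec_eq_smul h, smul_smul, smul_eq_mul]

end Matrix

theorem transU_apply_sub_eq_exp {n : ℕ} {M : Matrix (Fin n) (Fin n) ℝ} {u v : Fin n}
    (huv : u ≠ v) {θ : ℝ}
    (h : M *ᵥ (Pi.single u 1 - Pi.single v 1) = θ • (Pi.single u 1 - Pi.single v 1)) (t : ℝ) :
    transU M t u u - transU M t u v = Complex.exp ((θ * t : ℝ) * I) := by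
  set w : Fin n → ℂ := Pi.single u 1 - Pi.single v 1
  have hw : ofRealHom ∘ (Pi.single u 1 - Pi.single v 1 : Fin n → ℝ) = w := by
    ext j
    by_cases hju : j = u <;> by_cases hjv : j = v <;> simp_all [w]
  have hMw : M.map (↑) *ᵥ w = (θ : ℂ) • w := by
    ext i
    rw [← hw]
    change (M.map ofRealHom *ᵥ _) i = _
    rw [← RingHom.map_mulVec, h]
    simp
  have hUw : transU M t *ᵥ w = Complex.exp ((θ * t : ℝ) * I) • w := by
    rw [transU, exp_mulVec_of_mulVec_eq_smul (c := I * t * θ)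
      (by rw [smul_mulVec, hMw, smul_smul]), ← exp_eq_exp_ℂ]
    push_cast
    ring_nf
  simpa [w, mulVec_sub, huv] using congrFun hUw u

theorem stmt1_general {n : ℕ} (M : Matrix (Fin n) (Fin n) ℝ)
    (u v : Fin n) (huv : u ≠ v) (θ : ℝ)
    (h : M *ᵥ (Pi.single u 1 - Pi.single v 1) = θ • (Pi.single u 1 - Pi.single v 1)) :
    ∀ t : ℝ, 1 ≤ ‖transU M t u u‖ + ‖transU M t u v‖ := by
  intro t
  calc (1 : ℝ) = ‖transU M t u u - transU M t u v‖ := by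
        rw [transU_apply_sub_eq_exp huv h, norm_exp_ofReal_mul_I]
    _ ≤ ‖transU M t u u‖ + ‖transU M t u v‖ := norm_sub_le _ _

theorem stmt1 {n : ℕ} (M : Matrix (Fin n) (Fin n) ℝ) (hM : M.IsSymm)
    (u v : Fin n) (huv : u ≠ v) (θ : ℝ)
    (h : M *ᵥ (Pi.single u 1 - Pi.single v 1) = θ • (Pi.single u 1 - Pi.single v 1)) :
    ∀ t : ℝ, 1 ≤ ‖transU M t u u‖ + ‖transU M t u v‖ :=
  stmt1_general M u v huv θ h
end

section
/- Let A = η(J_m - I_m) + ωI_m with m ≥ 2 and η ≠ 0 real, and U(t) = exp(itA). Then for distinct indices u, v: |U(t)_{u,v}|² = (2/m²)(1 - cos(mηt)) and |U(t)_{u,u}|² = 1 - (m-1)|U(t)_{u,v}|². In particular |U(t)_{u,v}|² ≤ 4/m², with maximum attained exactly at t = jπ/(mη) for odd integers j, and |U(t)_{u,v}|² = 0 exactly at t = jπ/(mη) for even integers j. -/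
open Matrix Complex

/-- The all-ones matrix. -/
def allOnes (m : ℕ) (R : Type*) [One R] : Matrix (Fin m) (Fin m) R :=
  Matrix.of fun _ _ => 1

/-! With `P = J / m` the projection onto the constant vectors, the adjacency matrix splits
spectrally as `A = (ω - η) (1 - P) + (ω - η + m η) P`; as `1 - P` and `P` are complementary
idempotents, `U(t) = e^{iθ} (1 - P) + e^{i(θ + m η t)} P` with `θ = t (ω - η)`.
Every entry of `U(t)` is thus `r e^{iθ} + q e^{i(θ + m η t)}` with real `r, q`, whose
squared modulus `r² + q² + 2 r q cos (m η t)` depends only on the phase difference `m η t`. -/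

theorem NormedSpace.exp_smul_one_sub_add_smul_of_isIdempotentElem {𝕂 𝔸 : Type*} [RCLike 𝕂]
    [Ring 𝔸] [Algebra 𝕂 𝔸] [TopologicalSpace 𝔸] [IsTopologicalRing 𝔸] [T2Space 𝔸]
    [ContinuousSMul 𝕂 𝔸] {P : 𝔸} (hP : IsIdempotentElem P) (a b : 𝕂) :
    NormedSpace.exp (a • (1 - P) + b • P) =
      NormedSpace.exp a • (1 - P) + NormedSpace.exp b • P := by
  have hQ : IsIdempotentElem (1 - P) := hP.one_sub
  have hQP : (1 - P) * P = 0 := by rw [sub_mul, one_mul, hP.eq, sub_self]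
  have hPQ : P * (1 - P) = 0 := by rw [mul_sub, mul_one, hP.eq, sub_self]
  have hpow : ∀ n : ℕ, (a • (1 - P) + b • P) ^ n = a ^ n • (1 - P) + b ^ n • P := by
    intro n
    induction n with
    | zero => simp
    | succ n ih =>
      simp only [pow_succ, ih, add_mul, mul_add, smul_mul_smul_comm, hQ.eq, hP.eq, hQP, hPQ,
        smul_zero, add_zero, zero_add]
  have hsum := ((NormedSpace.exp_series_hasSum_exp' (𝕂 := 𝕂) a).smul_const (1 - P)).add
    ((NormedSpace.exp_series_hasSum_exp' (𝕂 := 𝕂) b).smul_const P)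
  rw [NormedSpace.exp_eq_tsum 𝕂]
  refine HasSum.tsum_eq ?_
  convert hsum using 2 with n
  rw [hpow, smul_add, smul_assoc, smul_assoc]

theorem Complex.sq_norm_mul_exp_mul_I_add_mul_exp_mul_I (r q x y : ℝ) :
    ‖(r : ℂ) * exp (x * I) + q * exp (y * I)‖ ^ 2 =
      r ^ 2 + q ^ 2 + 2 * r * q * Real.cos (y - x) := by
  have hre : (r : ℂ) * exp (x * I) + q * exp (y * I) =
      ((r * Real.cos x + q * Real.cos y : ℝ) : ℂ) +
        ((r * Real.sin x + q * Real.sin y : ℝ) : ℂ) * I := by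
    simp only [exp_mul_I, ← ofReal_cos, ← ofReal_sin]
    push_cast
    ring
  rw [hre, Complex.sq_norm, normSq_add_mul_I, Real.cos_sub]
  linear_combination r ^ 2 * Real.sin_sq_add_cos_sq x + q ^ 2 * Real.sin_sq_add_cos_sq y

theorem Real.cos_mul_eq_neg_one_iff {a : ℝ} (ha : a ≠ 0) (t : ℝ) :
    Real.cos (a * t) = -1 ↔ ∃ j : ℤ, Odd j ∧ t = j * Real.pi / a := by
  rw [Real.cos_eq_neg_one_iff]
  constructor
  · rintro ⟨k, hk⟩
    refine ⟨2 * k + 1, odd_two_mul_add_one k, ?_⟩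
    rw [eq_div_iff ha]
    push_cast
    linarith
  · rintro ⟨j, ⟨k, rfl⟩, rfl⟩
    refine ⟨k, ?_⟩
    field_simp
    push_cast
    ring

theorem Real.cos_mul_eq_one_iff {a : ℝ} (ha : a ≠ 0) (t : ℝ) :
    Real.cos (a * t) = 1 ↔ ∃ j : ℤ, Even j ∧ t = j * Real.pi / a := by
  rw [Real.cos_eq_one_iff]
  constructor
  · rintro ⟨k, hk⟩
    refine ⟨2 * k, even_two_mul k, ?_⟩
    rw [eq_div_iff ha]
    push_cast
    linarith
  · rintro ⟨j, ⟨k, rfl⟩, rfl⟩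
    refine ⟨k, ?_⟩
    field_simp
    push_cast
    ring

theorem isIdempotentElem_inv_smul_allOnes {K : Type*} [Field K] {m : ℕ} (hm : (m : K) ≠ 0) :
    IsIdempotentElem ((m : K)⁻¹ • allOnes m K) := by
  ext i j
  simp only [allOnes, smul_of, Matrix.mul_apply, of_apply, Pi.smul_apply, smul_eq_mul, mul_one,
    Finset.sum_const, Finset.card_univ, Fintype.card_fin, nsmul_eq_mul, Matrix.smul_apply]
  field_simp

section CompleteGraph

variable {m : ℕ} (η ω : ℝ)

local notation "P" => ((m : ℂ)⁻¹ • allOnes m ℂ)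

theorem map_ofReal_completeGraph (hm : m ≠ 0) :
    (η • (allOnes m ℝ - 1) + ω • 1 : Matrix (Fin m) (Fin m) ℝ).map ((↑) : ℝ → ℂ) =
      ((ω - η : ℝ) : ℂ) • (1 - P) + ((ω - η + m * η : ℝ) : ℂ) • P := by
  have : (m : ℂ) ≠ 0 := by exact_mod_cast hm
  ext i j
  by_cases hij : i = j <;> simp [allOnes, hij] <;> field_simp <;> ring

theorem transU_completeGraph (hm : m ≠ 0) (t : ℝ) :
    transU (η • (allOnes m ℝ - 1) + ω • 1) t =
      exp ((t * (ω - η) : ℝ) * I) • (1 - P) + exp ((t * (ω - η) + m * η * t : ℝ) * I) • P := by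
  have hP : IsIdempotentElem P := isIdempotentElem_inv_smul_allOnes (by exact_mod_cast hm)
  rw [transU, map_ofReal_completeGraph η ω hm, smul_add, smul_smul, smul_smul,
    NormedSpace.exp_smul_one_sub_add_smul_of_isIdempotentElem hP, ← Complex.exp_eq_exp_ℂ]
  push_cast
  ring_nf

theorem transU_completeGraph_apply_of_ne (hm : m ≠ 0) (t : ℝ) {u v : Fin m} (huv : u ≠ v) :
    transU (η • (allOnes m ℝ - 1) + ω • 1) t u v =
      ((-(m : ℝ)⁻¹ : ℝ) : ℂ) * exp ((t * (ω - η) : ℝ) * I) +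
        (((m : ℝ)⁻¹ : ℝ) : ℂ) * exp ((t * (ω - η) + m * η * t : ℝ) * I) := by
  rw [transU_completeGraph η ω hm]
  simp only [ofReal_mul, ofReal_sub, allOnes, smul_of, ofReal_add, ofReal_natCast, Matrix.add_apply,
    Matrix.smul_apply, Matrix.sub_apply, Matrix.one_apply_ne huv, of_apply, Pi.smul_apply,
    smul_eq_mul, mul_one, zero_sub, mul_neg, ofReal_neg, ofReal_inv, neg_mul]
  ring

theorem transU_completeGraph_apply_self (hm : m ≠ 0) (t : ℝ) (u : Fin m) :
    transU (η • (allOnes m ℝ - 1) + ω • 1) t u u =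
      ((1 - (m : ℝ)⁻¹ : ℝ) : ℂ) * exp ((t * (ω - η) : ℝ) * I) +
        (((m : ℝ)⁻¹ : ℝ) : ℂ) * exp ((t * (ω - η) + m * η * t : ℝ) * I) := by
  rw [transU_completeGraph η ω hm]
  simp only [ofReal_mul, ofReal_sub, allOnes, smul_of, ofReal_add, ofReal_natCast, Matrix.add_apply,
    Matrix.smul_apply, Matrix.sub_apply, one_apply_eq, of_apply, Pi.smul_apply, smul_eq_mul,
    mul_one, ofReal_one, ofReal_inv]
  ring

theorem sq_norm_transU_completeGraph_apply_of_ne (hm : m ≠ 0) (t : ℝ) {u v : Fin m}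
    (huv : u ≠ v) :
    ‖transU (η • (allOnes m ℝ - 1) + ω • 1) t u v‖ ^ 2 =
      (2 / (m : ℝ) ^ 2) * (1 - Real.cos (m * η * t)) := by
  rw [transU_completeGraph_apply_of_ne η ω hm t huv,
    Complex.sq_norm_mul_exp_mul_I_add_mul_exp_mul_I, add_sub_cancel_left]
  ring

theorem sq_norm_transU_completeGraph_apply_self (hm : m ≠ 0) (t : ℝ) (u : Fin m) :
    ‖transU (η • (allOnes m ℝ - 1) + ω • 1) t u u‖ ^ 2 =
      1 - ((m : ℝ) - 1) * ((2 / (m : ℝ) ^ 2) * (1 - Real.cos (m * η * t))) := by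
  have : (m : ℝ) ≠ 0 := by exact_mod_cast hm
  rw [transU_completeGraph_apply_self η ω hm t u,
    Complex.sq_norm_mul_exp_mul_I_add_mul_exp_mul_I, add_sub_cancel_left]
  field_simp
  ring

end CompleteGraph

theorem stmt6 {m : ℕ} (hm : 2 ≤ m) (η ω : ℝ) (hη : η ≠ 0)
    (A : Matrix (Fin m) (Fin m) ℝ)
    (hA : A = η • (allOnes m ℝ - 1) + ω • 1)
    (u v : Fin m) (huv : u ≠ v) :
    ∀ t : ℝ,
      ‖transU A t u v‖ ^ 2 = (2 / (m : ℝ) ^ 2) * (1 - Real.cos (m * η * t)) ∧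
      ‖transU A t u u‖ ^ 2 = 1 - ((m : ℝ) - 1) * ‖transU A t u v‖ ^ 2 ∧
      ‖transU A t u v‖ ^ 2 ≤ 4 / (m : ℝ) ^ 2 ∧
      (‖transU A t u v‖ ^ 2 = 4 / (m : ℝ) ^ 2 ↔
        ∃ j : ℤ, Odd j ∧ t = j * Real.pi / (m * η)) ∧
      (‖transU A t u v‖ ^ 2 = 0 ↔
        ∃ j : ℤ, Even j ∧ t = j * Real.pi / (m * η)) := by
  intro t
  subst hA
  have hm0 : m ≠ 0 := by omega
  have hm2 : (0 : ℝ) < (m : ℝ) ^ 2 := by positivity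
  have hmη : (m : ℝ) * η ≠ 0 := mul_ne_zero (by exact_mod_cast hm0) hη
  rw [← Real.cos_mul_eq_neg_one_iff hmη, ← Real.cos_mul_eq_one_iff hmη,
    sq_norm_transU_completeGraph_apply_of_ne η ω hm0 t huv]
  refine ⟨rfl, sq_norm_transU_completeGraph_apply_self η ω hm0 t u, ?_, ?_, ?_⟩
  · rw [div_mul_eq_mul_div, div_le_div_iff_of_pos_right hm2]
    linarith [Real.neg_one_le_cos (m * η * t)]
  · rw [div_mul_eq_mul_div, div_left_inj' hm2.ne']
    constructor <;> intro h <;> linarith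
  · rw [mul_eq_zero, or_iff_right (by positivity), sub_eq_zero, eq_comm]
end

section
/- Let M be a real symmetric matrix, u an index, and suppose the eigenvalue support σ_u(M) = {λ : E_λ e_u ≠ 0} has exactly two elements λ₁ > λ₂ (where E_λ are the spectral projections of M). Then u is periodic with minimum period 2π/(λ₁ - λ₂): |U(2π/(λ₁-λ₂))_{u,u}| = 1 and no smaller positive time works. -/
open Matrix Complex

/-- `S, E` constitute the spectral decomposition of the real symmetric matrix `M`
(viewed as a complex matrix): the `E lam` for `lam ∈ S` are mutually orthogonal
Hermitian projections summing to the identity, and `M = ∑ lam • E lam`. -/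
def IsSpectralDecompOf {n : ℕ} (M : Matrix (Fin n) (Fin n) ℝ)
    (S : Finset ℝ) (E : ℝ → Matrix (Fin n) (Fin n) ℂ) : Prop :=
  (∀ lam ∈ S, (E lam).IsHermitian ∧ E lam * E lam = E lam) ∧
  (∀ lam ∈ S, ∀ mu ∈ S, lam ≠ mu → E lam * E mu = 0) ∧
  (∑ lam ∈ S, E lam) = 1 ∧
  M.map (fun x => (x : ℂ)) = ∑ lam ∈ S, (lam : ℂ) • E lam

/-
Expanding `exp (i t M)` along the spectral decomposition gives `U(t) = ∑ e^{itλ} E_λ`, so the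
diagonal entry at `u` is `α e^{itλ₁} + β e^{itλ₂}`, where `α = ‖E_{λ₁} e_u‖²` and
`β = ‖E_{λ₂} e_u‖²` are positive (the support is exactly `{λ₁, λ₂}`) and sum to `1` (the
projections resolve the identity). Hence `|U(t)_{uu}| = |α e^{iθ} + β|` with `θ = t (λ₁ - λ₂)`,
and `|α e^{iθ} + β|² = 1 - 2αβ(1 - cos θ)` equals `1` exactly when `θ ∈ 2πℤ`.
-/

section OrthogonalIdempotents

variable {ι A : Type*} {S : Finset ι} {E : ι → A}

theorem pow_sum_smul_of_orthogonal_idempotents {R : Type*} [CommSemiring R] [Ring A]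
    [Algebra R A] (hidem : ∀ i ∈ S, E i * E i = E i)
    (horth : ∀ i ∈ S, ∀ j ∈ S, i ≠ j → E i * E j = 0) (hsum : ∑ i ∈ S, E i = 1)
    (c : ι → R) (k : ℕ) :
    (∑ i ∈ S, c i • E i) ^ k = ∑ i ∈ S, c i ^ k • E i := by
  induction k with
  | zero => simpa using hsum.symm
  | succ k ih =>
    rw [pow_succ, ih, Finset.sum_mul_sum]
    refine Finset.sum_congr rfl fun i hi => ?_
    rw [Finset.sum_eq_single_of_mem i hi fun j hj hji => by
      rw [smul_mul_smul_comm, horth i hi j hj hji.symm, smul_zero]]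
    rw [smul_mul_smul_comm, hidem i hi, ← pow_succ]

theorem exp_sum_smul_of_orthogonal_idempotents [Ring A] [Algebra ℂ A] [TopologicalSpace A]
    [IsTopologicalRing A] [ContinuousSMul ℂ A] [T2Space A]
    (hidem : ∀ i ∈ S, E i * E i = E i)
    (horth : ∀ i ∈ S, ∀ j ∈ S, i ≠ j → E i * E j = 0) (hsum : ∑ i ∈ S, E i = 1)
    (c : ι → ℂ) :
    NormedSpace.exp (∑ i ∈ S, c i • E i) = ∑ i ∈ S, exp (c i) • E i := by
  have hsummable (i : ι) := NormedSpace.expSeries_summable' (𝕂 := ℂ) (c i)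
  simp_rw [NormedSpace.exp_eq_tsum ℂ, pow_sum_smul_of_orthogonal_idempotents hidem horth hsum,
    Finset.smul_sum, ← smul_assoc]
  rw [Summable.tsum_finsetSum fun i _ => (hsummable i).smul_const _]
  refine Finset.sum_congr rfl fun i _ => ?_
  rw [(hsummable i).tsum_smul_const, Complex.exp_eq_exp_ℂ, NormedSpace.exp_eq_tsum ℂ]

end OrthogonalIdempotents

theorem Matrix.IsHermitian.apply_self_eq_sum_normSq {m : Type*} [Fintype m]
    {P : Matrix m m ℂ} (hP : P.IsHermitian) (hPP : P * P = P) (u : m) :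
    P u u = ((∑ j, normSq (P j u) : ℝ) : ℂ) := by
  calc P u u = (P * P) u u := by rw [hPP]
    _ = ∑ j, star (P j u) * P j u := by simp only [mul_apply, hP.apply]
    _ = ((∑ j, normSq (P j u) : ℝ) : ℂ) := by
      push_cast
      simp only [Complex.star_def, Complex.normSq_eq_conj_mul_self]

theorem Matrix.sum_normSq_apply_pos_iff {m : Type*} [Fintype m] [DecidableEq m]
    (P : Matrix m m ℂ) (u : m) :
    0 < ∑ j, normSq (P j u) ↔ P *ᵥ Pi.single u 1 ≠ 0 := by
  simp only [mulVec_single, ne_eq, funext_iff, Pi.zero_apply, not_forall]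
  rw [Finset.sum_pos_iff_of_nonneg fun j _ => normSq_nonneg _]
  simp [Complex.normSq_pos]

theorem norm_ofReal_mul_exp_add_ofReal_lt_one {α β θ : ℝ} (hα : 0 < α) (hβ : 0 < β)
    (hαβ : α + β = 1) (hθ : Real.cos θ ≠ 1) : ‖(α : ℂ) * exp (θ * I) + β‖ < 1 := by
  have hcos : Real.cos θ < 1 := (Real.cos_le_one θ).lt_of_ne hθ
  rw [← sq_lt_one_iff₀ (norm_nonneg _), Complex.sq_norm, normSq_apply]
  simp only [add_re, add_im, mul_re, mul_im, ofReal_re, ofReal_im, exp_ofReal_mul_I_re,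
    exp_ofReal_mul_I_im, zero_mul, sub_zero, add_zero]
  have hexpand : (α * Real.cos θ + β) * (α * Real.cos θ + β) + α * Real.sin θ * (α * Real.sin θ)
      = 1 - 2 * α * β * (1 - Real.cos θ) := by
    linear_combination α ^ 2 * Real.sin_sq_add_cos_sq θ + (α + β + 1) * hαβ
  nlinarith [mul_pos (mul_pos hα hβ) (sub_pos.2 hcos)]

theorem sum_mul_apply_self_eq_of_support_pair {m : Type*} [Fintype m] [DecidableEq m]
    {S : Finset ℝ} {E : ℝ → Matrix m m ℂ} {u : m} {lam₁ lam₂ : ℝ} (h1 : lam₁ ∈ S)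
    (h2 : lam₂ ∈ S) (hne : lam₁ ≠ lam₂)
    (hsupp : ∀ lam ∈ S, (E lam *ᵥ Pi.single u 1 ≠ 0 ↔ lam = lam₁ ∨ lam = lam₂)) (g : ℝ → ℂ) :
    ∑ lam ∈ S, g lam * E lam u u = g lam₁ * E lam₁ u u + g lam₂ * E lam₂ u u := by
  rw [← Finset.sum_pair hne (f := fun lam => g lam * E lam u u)]
  refine (Finset.sum_subset (by simp [Finset.insert_subset_iff, h1, h2])
    fun lam hlam hout => ?_).symm
  have hcol : E lam *ᵥ Pi.single u 1 = 0 := by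
    rw [← not_ne_iff, hsupp lam hlam]
    simpa using hout
  simpa [mulVec_single] using Or.inr (congr_fun hcol u)

namespace IsSpectralDecompOf

variable {n : ℕ} {M : Matrix (Fin n) (Fin n) ℝ} {S : Finset ℝ} {E : ℝ → Matrix (Fin n) (Fin n) ℂ}

theorem transU_eq (hSE : IsSpectralDecompOf M S E) (t : ℝ) :
    transU M t = ∑ lam ∈ S, exp (I * t * lam) • E lam := by
  obtain ⟨hproj, horth, hsum, hdecomp⟩ := hSE
  rw [transU, hdecomp, Finset.smul_sum]
  simp_rw [smul_smul]
  exact exp_sum_smul_of_orthogonal_idempotents (fun lam h => (hproj lam h).2) horth hsum _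

theorem exists_norm_transU_apply_self_eq (hSE : IsSpectralDecompOf M S E) {u : Fin n}
    {lam₁ lam₂ : ℝ} (h1 : lam₁ ∈ S) (h2 : lam₂ ∈ S) (hne : lam₁ ≠ lam₂)
    (hsupp : ∀ lam ∈ S, (E lam *ᵥ Pi.single u 1 ≠ 0 ↔ lam = lam₁ ∨ lam = lam₂)) :
    ∃ α β : ℝ, 0 < α ∧ 0 < β ∧ α + β = 1 ∧
      ∀ t : ℝ, ‖transU M t u u‖ = ‖(α : ℂ) * exp ((t * (lam₁ - lam₂) : ℝ) * I) + β‖ := by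
  have hweight (lam : ℝ) (hlam : lam ∈ S) :=
    (hSE.1 lam hlam).1.apply_self_eq_sum_normSq (hSE.1 lam hlam).2 u
  have hpos (lam : ℝ) (hlam : lam ∈ S) (hor : lam = lam₁ ∨ lam = lam₂) :=
    ((E lam).sum_normSq_apply_pos_iff u).2 ((hsupp lam hlam).2 hor)
  have hpair := sum_mul_apply_self_eq_of_support_pair h1 h2 hne hsupp
  refine ⟨_, _, hpos lam₁ h1 (.inl rfl), hpos lam₂ h2 (.inr rfl), ?_, fun t => ?_⟩
  · have hid := congr_fun (congr_fun hSE.2.2.1 u) u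
    simp only [Matrix.sum_apply, one_apply_eq] at hid
    have hpair_one := hpair fun _ => 1
    simp only [one_mul] at hpair_one
    rw [hpair_one, hweight lam₁ h1, hweight lam₂ h2] at hid
    exact_mod_cast hid
  · have hentry : transU M t u u
        = exp (I * t * lam₂) * ((∑ j, normSq (E lam₁ j u) : ℝ) * exp ((t * (lam₁ - lam₂) : ℝ) * I)
          + (∑ j, normSq (E lam₂ j u) : ℝ)) := by
      simp only [hSE.transU_eq, Matrix.sum_apply, Matrix.smul_apply, smul_eq_mul]
      rw [hpair, hweight lam₁ h1, hweight lam₂ h2]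
      rw [show I * t * lam₁ = I * t * lam₂ + (t * (lam₁ - lam₂) : ℝ) * I by push_cast; ring,
        exp_add]
      ring
    rw [hentry, norm_mul, show I * t * lam₂ = (t * lam₂ : ℝ) * I by push_cast; ring,
      norm_exp_ofReal_mul_I, one_mul]

end IsSpectralDecompOf

theorem stmt10_general {n : ℕ} (M : Matrix (Fin n) (Fin n) ℝ)
    (S : Finset ℝ) (E : ℝ → Matrix (Fin n) (Fin n) ℂ)
    (hSE : IsSpectralDecompOf M S E) (u : Fin n)
    (lam₁ lam₂ : ℝ) (h1 : lam₁ ∈ S) (h2 : lam₂ ∈ S) (hlt : lam₂ < lam₁)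
    (hsupp : ∀ lam ∈ S, (E lam *ᵥ Pi.single u 1 ≠ 0 ↔ lam = lam₁ ∨ lam = lam₂)) :
    ‖transU M (2 * Real.pi / (lam₁ - lam₂)) u u‖ = 1 ∧
    ∀ t : ℝ, 0 < t → t < 2 * Real.pi / (lam₁ - lam₂) →
      ‖transU M t u u‖ ≠ 1 := by
  have hgap : 0 < lam₁ - lam₂ := sub_pos.2 hlt
  obtain ⟨α, β, hα, hβ, hαβ, hnorm⟩ :=
    hSE.exists_norm_transU_apply_self_eq h1 h2 hlt.ne' hsupp
  refine ⟨?_, fun t ht hlt_period => ?_⟩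
  · rw [hnorm, div_mul_cancel₀ _ hgap.ne', ofReal_mul, ofReal_ofNat, exp_two_pi_mul_I, mul_one,
      ← ofReal_add, hαβ, ofReal_one, norm_one]
  · have hθ_lt : t * (lam₁ - lam₂) < 2 * Real.pi := (lt_div_iff₀ hgap).1 hlt_period
    have hcos : Real.cos (t * (lam₁ - lam₂)) ≠ 1 := fun h =>
      (mul_pos ht hgap).ne' <| (Real.cos_eq_one_iff_of_lt_of_lt
        (by linarith [mul_pos ht hgap, Real.pi_pos]) hθ_lt).1 h
    rw [hnorm]
    exact (norm_ofReal_mul_exp_add_ofReal_lt_one hα hβ hαβ hcos).ne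

theorem stmt10 {n : ℕ} (M : Matrix (Fin n) (Fin n) ℝ) (hM : M.IsSymm)
    (S : Finset ℝ) (E : ℝ → Matrix (Fin n) (Fin n) ℂ)
    (hSE : IsSpectralDecompOf M S E) (u : Fin n)
    (lam₁ lam₂ : ℝ) (h1 : lam₁ ∈ S) (h2 : lam₂ ∈ S) (hlt : lam₂ < lam₁)
    (hsupp : ∀ lam ∈ S, (E lam *ᵥ Pi.single u 1 ≠ 0 ↔ lam = lam₁ ∨ lam = lam₂)) :
    ‖transU M (2 * Real.pi / (lam₁ - lam₂)) u u‖ = 1 ∧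
    ∀ t : ℝ, 0 < t → t < 2 * Real.pi / (lam₁ - lam₂) →
      ‖transU M t u u‖ ≠ 1 :=
  stmt10_general M S E hSE u lam₁ lam₂ h1 h2 hlt hsupp
end

section
/- Let M be a real symmetric matrix with spectral projections E_λ, and suppose u, v are strongly cospectral indices (E_λ e_u = ± E_λ e_v for each eigenvalue λ), with σ_u⁺(M) = {λ₁,...,λ_r} and σ_u⁻(M) = {θ}. Then perfect state transfer from u to v occurs at time τ if and only if for each j = 1,...,r there is an odd integer m_j with τ(λ_j - θ) = m_j π. -/
open Matrix Complex

/-!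
Since `U(τ) = ∑ μ, e^{iτμ} E_μ`, the equation `U(τ) e_u = γ e_v` holds iff it holds after applying
each projection `E_μ`; by strong cospectrality this says `e^{iτλ_j} = γ` for all `j` and
`e^{iτθ} = -γ`. Eliminating `γ` leaves `e^{iτ(λ_j - θ)} = -1`, i.e. `τ(λ_j - θ) ∈ π(2ℤ + 1)`.
-/

theorem Matrix.exp_mul_of_mul_eq_smul {m : Type*} [Fintype m] [DecidableEq m]
    {A E : Matrix m m ℂ} {c : ℂ} (h : A * E = c • E) :
    NormedSpace.exp A * E = cexp c • E := by
  have hsemiconj : SemiconjBy E (algebraMap ℂ _ c) A := by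
    rw [SemiconjBy, h, Algebra.algebraMap_eq_smul_one, mul_smul_one]
  have hexp : E * algebraMap ℂ _ (NormedSpace.exp c) = NormedSpace.exp A * E := by
    -- the general `NormedSpace.exp` lemmas need a normed-algebra structure on matrices
    open scoped Norms.Operator in
    rw [NormedSpace.algebraMap_exp_comm]
    exact hsemiconj.exp_right
  rw [← hexp, Algebra.algebraMap_eq_smul_one, mul_smul_one, Complex.exp_eq_exp_ℂ]

theorem Complex.exp_mul_I_eq_neg_one_iff {a : ℝ} :
    cexp (a * I) = -1 ↔ ∃ m : ℤ, Odd m ∧ a = m * Real.pi := by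
  have hshift : cexp (a * I) = -cexp ((a - Real.pi : ℝ) * I) := by
    rw [ofReal_sub, sub_mul, exp_sub, exp_pi_mul_I, div_neg, div_one, neg_neg]
  rw [hshift, neg_inj, exp_eq_one_iff]
  constructor
  · rintro ⟨k, hk⟩
    refine ⟨2 * k + 1, odd_two_mul_add_one k, ?_⟩
    have : ((a - Real.pi : ℝ) : ℂ) = ((2 * k * Real.pi : ℝ) : ℂ) :=
      mul_right_cancel₀ I_ne_zero (by push_cast at hk ⊢; linear_combination hk)
    push_cast
    linarith [ofReal_injective this]
  · rintro ⟨m, ⟨k, rfl⟩, rfl⟩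
    exact ⟨k, by push_cast; ring⟩

theorem exists_norm_eq_one_phase_iff {ι : Type*} (lam : ι → ℝ) (θ τ : ℝ) :
    (∃ γ : ℂ, ‖γ‖ = 1 ∧ (∀ j, cexp (I * τ * lam j) = γ) ∧ cexp (I * τ * θ) = -γ) ↔
      ∀ j, ∃ m : ℤ, Odd m ∧ τ * (lam j - θ) = m * Real.pi := by
  have hsplit (j : ι) :
      cexp (I * τ * lam j) = cexp (I * τ * θ) * cexp ((τ * (lam j - θ) : ℝ) * I) := by
    rw [← exp_add]; push_cast; ring_nf
  simp only [← exp_mul_I_eq_neg_one_iff, hsplit]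
  constructor
  · rintro ⟨γ, -, hlam, hθ⟩ j
    rw [hθ] at hlam
    have hγ : -γ ≠ 0 := hθ ▸ exp_ne_zero _
    exact mul_left_cancel₀ hγ ((hlam j).trans (by ring))
  · intro h
    refine ⟨-cexp (I * τ * θ), ?_, fun j => by rw [h j, mul_neg_one], (neg_neg _).symm⟩
    rw [norm_neg, norm_exp]
    simp

namespace IsSpectralDecompOf

variable {n : ℕ} {M : Matrix (Fin n) (Fin n) ℝ} {S : Finset ℝ} {E : ℝ → Matrix (Fin n) (Fin n) ℂ}

theorem mul_sum_smul (hSE : IsSpectralDecompOf M S E) {ν : ℝ} (hν : ν ∈ S) (c : ℝ → ℂ) :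
    E ν * ∑ μ ∈ S, c μ • E μ = c ν • E ν := by
  rw [Finset.mul_sum, Finset.sum_eq_single_of_mem ν hν fun μ hμ hμν => ?_]
  · rw [mul_smul_comm, (hSE.1 ν hν).2]
  · rw [mul_smul_comm, hSE.2.1 ν hν μ hμ hμν.symm, smul_zero]

theorem sum_smul_mul (hSE : IsSpectralDecompOf M S E) {ν : ℝ} (hν : ν ∈ S) (c : ℝ → ℂ) :
    (∑ μ ∈ S, c μ • E μ) * E ν = c ν • E ν := by
  rw [Finset.sum_mul, Finset.sum_eq_single_of_mem ν hν fun μ hμ hμν => ?_]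
  · rw [smul_mul_assoc, (hSE.1 ν hν).2]
  · rw [smul_mul_assoc, hSE.2.1 μ hμ ν hν hμν, smul_zero]

theorem transU_mul (hSE : IsSpectralDecompOf M S E) {μ : ℝ} (hμ : μ ∈ S) (t : ℝ) :
    transU M t * E μ = cexp (I * t * μ) • E μ := by
  refine Matrix.exp_mul_of_mul_eq_smul ?_
  rw [smul_mul_assoc, hSE.2.2.2, hSE.sum_smul_mul hμ, smul_smul]

theorem transU_eq_sum (hSE : IsSpectralDecompOf M S E) (t : ℝ) :
    transU M t = ∑ μ ∈ S, cexp (I * t * μ) • E μ := by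
  rw [← mul_one (transU M t), ← hSE.2.2.1, Finset.mul_sum]
  exact Finset.sum_congr rfl fun μ hμ => hSE.transU_mul hμ t

theorem mul_transU (hSE : IsSpectralDecompOf M S E) {μ : ℝ} (hμ : μ ∈ S) (t : ℝ) :
    E μ * transU M t = cexp (I * t * μ) • E μ := by
  rw [hSE.transU_eq_sum, hSE.mul_sum_smul hμ]

theorem eq_iff_forall_mulVec_eq (hSE : IsSpectralDecompOf M S E) {x y : Fin n → ℂ} :
    x = y ↔ ∀ μ ∈ S, E μ *ᵥ x = E μ *ᵥ y := by
  refine ⟨fun h μ _ => h ▸ rfl, fun h => ?_⟩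
  rw [← one_mulVec x, ← one_mulVec y, ← hSE.2.2.1, sum_mulVec, sum_mulVec]
  exact Finset.sum_congr rfl h

theorem transU_mulVec_eq_iff (hSE : IsSpectralDecompOf M S E) (t : ℝ) {x y : Fin n → ℂ} :
    transU M t *ᵥ x = y ↔ ∀ μ ∈ S, cexp (I * t * μ) • (E μ *ᵥ x) = E μ *ᵥ y := by
  rw [hSE.eq_iff_forall_mulVec_eq]
  refine forall₂_congr fun μ hμ => ?_
  rw [mulVec_mulVec, hSE.mul_transU hμ, smul_mulVec]

theorem transU_mulVec_eq_smul_iff (hSE : IsSpectralDecompOf M S E) {ι : Type*} {lam : ι → ℝ}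
    {θ : ℝ} (hθS : θ ∈ S) (hlamS : ∀ j, lam j ∈ S) {x y : Fin n → ℂ}
    (hplus : ∀ j, E (lam j) *ᵥ x = E (lam j) *ᵥ y ∧ E (lam j) *ᵥ x ≠ 0)
    (hminus : E θ *ᵥ x = -(E θ *ᵥ y) ∧ E θ *ᵥ x ≠ 0)
    (hrest : ∀ μ ∈ S, μ ∉ Set.range lam → μ ≠ θ → E μ *ᵥ x = 0 ∧ E μ *ᵥ y = 0) (τ : ℝ) (γ : ℂ) :
    transU M τ *ᵥ x = γ • y ↔ (∀ j, cexp (I * τ * lam j) = γ) ∧ cexp (I * τ * θ) = -γ := by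
  simp only [hSE.transU_mulVec_eq_iff, mulVec_smul]
  constructor
  · intro h
    refine ⟨fun j => smul_left_injective ℂ (hplus j).2 ?_, smul_left_injective ℂ hminus.2 ?_⟩
    · simpa only [(hplus j).1] using h _ (hlamS j)
    · simpa only [hminus.1, smul_neg, neg_smul, neg_neg] using h θ hθS
  · rintro ⟨hlam, hθ⟩ μ hμ
    by_cases hμlam : μ ∈ Set.range lam
    · obtain ⟨j, rfl⟩ := hμlam
      rw [hlam j, (hplus j).1]
    by_cases hμθ : μ = θ
    · rw [hμθ, hθ, hminus.1, neg_smul_neg]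
    obtain ⟨hx, hy⟩ := hrest μ hμ hμlam hμθ
    rw [hx, hy, smul_zero, smul_zero]

end IsSpectralDecompOf

theorem stmt13_general {n : ℕ} (M : Matrix (Fin n) (Fin n) ℝ)
    (S : Finset ℝ) (E : ℝ → Matrix (Fin n) (Fin n) ℂ)
    (hSE : IsSpectralDecompOf M S E) (u v : Fin n)
    (r : ℕ) (lam : Fin r → ℝ)
    (θ : ℝ) (hθS : θ ∈ S) (hlamS : ∀ j, lam j ∈ S)
    -- σ_u⁺(M) = {lam 1, ..., lam r}
    (hplus : ∀ j, E (lam j) *ᵥ Pi.single u 1 = E (lam j) *ᵥ Pi.single v 1 ∧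
      E (lam j) *ᵥ Pi.single u 1 ≠ 0)
    -- σ_u⁻(M) = {θ}
    (hminus : E θ *ᵥ Pi.single u 1 = -(E θ *ᵥ Pi.single v 1) ∧
      E θ *ᵥ Pi.single u 1 ≠ 0)
    -- all other eigenvalues are outside the supports of `u` and `v`
    (hrest : ∀ mu ∈ S, mu ∉ Set.range lam → mu ≠ θ →
      E mu *ᵥ Pi.single u 1 = 0 ∧ E mu *ᵥ Pi.single v 1 = 0)
    (τ : ℝ) :
    (∃ γ : ℂ, ‖γ‖ = 1 ∧
        transU M τ *ᵥ Pi.single u 1 = γ • (Pi.single v 1 : Fin n → ℂ)) ↔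
      ∀ j, ∃ m : ℤ, Odd m ∧ τ * (lam j - θ) = m * Real.pi := by
  simp only [hSE.transU_mulVec_eq_smul_iff hθS hlamS hplus hminus hrest]
  exact exists_norm_eq_one_phase_iff lam θ τ

theorem stmt13 {n : ℕ} (M : Matrix (Fin n) (Fin n) ℝ) (hM : M.IsSymm)
    (S : Finset ℝ) (E : ℝ → Matrix (Fin n) (Fin n) ℂ)
    (hSE : IsSpectralDecompOf M S E) (u v : Fin n) (huv : u ≠ v)
    (r : ℕ) (hr : 0 < r) (lam : Fin r → ℝ) (hinj : Function.Injective lam)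
    (θ : ℝ) (hθS : θ ∈ S) (hlamS : ∀ j, lam j ∈ S) (hθlam : ∀ j, θ ≠ lam j)
    -- σ_u⁺(M) = {lam 1, ..., lam r}
    (hplus : ∀ j, E (lam j) *ᵥ Pi.single u 1 = E (lam j) *ᵥ Pi.single v 1 ∧
      E (lam j) *ᵥ Pi.single u 1 ≠ 0)
    -- σ_u⁻(M) = {θ}
    (hminus : E θ *ᵥ Pi.single u 1 = -(E θ *ᵥ Pi.single v 1) ∧
      E θ *ᵥ Pi.single u 1 ≠ 0)
    -- all other eigenvalues are outside the supports of `u` and `v`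
    (hrest : ∀ mu ∈ S, mu ∉ Set.range lam → mu ≠ θ →
      E mu *ᵥ Pi.single u 1 = 0 ∧ E mu *ᵥ Pi.single v 1 = 0)
    (τ : ℝ) :
    (∃ γ : ℂ, ‖γ‖ = 1 ∧
        transU M τ *ᵥ Pi.single u 1 = γ • (Pi.single v 1 : Fin n → ℂ)) ↔
      ∀ j, ∃ m : ℤ, Odd m ∧ τ * (lam j - θ) = m * Real.pi :=
  stmt13_general M S E hSE u v r lam θ hθS hlamS hplus hminus hrest τ
end

section
/- Let M be a real symmetric matrix and u, v strongly cospectral indices with σ_u⁺(M) = {λ₁,...,λ_r} and σ_u⁻(M) = {θ}. Then (e^{iζ}cos γ, i e^{iζ}sin γ)-fractional revival occurs from u to v at time τ, i.e., U(τ)e_u = e^{iζ}cos(γ) e_u + i e^{iζ}sin(γ) e_v, if and only if τ(λ_j - θ) ≡ 2γ (mod 2π) for each j and τθ ≡ ζ - γ (mod 2π). -/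
open Matrix Complex

section Aux

variable {n : ℕ}

lemma aux_sum_mulVec {ι : Type*} (s : Finset ι) (A : ι → Matrix (Fin n) (Fin n) ℂ)
    (w : Fin n → ℂ) : (∑ i ∈ s, A i) *ᵥ w = ∑ i ∈ s, A i *ᵥ w := by
  induction s using Finset.cons_induction with
  | empty => simp [Matrix.zero_mulVec]
  | cons a s ha ih => simp [Finset.sum_cons, Matrix.add_mulVec, ih]

lemma aux_pow_sum (S : Finset ℝ) (E : ℝ → Matrix (Fin n) (Fin n) ℂ)
    (hidem : ∀ μ ∈ S, E μ * E μ = E μ)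
    (horth : ∀ μ ∈ S, ∀ ν ∈ S, μ ≠ ν → E μ * E ν = 0)
    (hone : (∑ μ ∈ S, E μ) = 1) (c : ℝ → ℂ) (k : ℕ) :
    (∑ μ ∈ S, c μ • E μ) ^ k = ∑ μ ∈ S, (c μ) ^ k • E μ := by
  induction k with
  | zero => simpa using hone.symm
  | succ k ih =>
    rw [pow_succ, ih, Finset.sum_mul_sum]
    refine Finset.sum_congr rfl fun μ hμ => ?_
    rw [Finset.sum_eq_single_of_mem μ hμ]
    · rw [smul_mul_smul_comm, hidem μ hμ, pow_succ, ← smul_smul]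
    · intro ν hν hne
      rw [smul_mul_smul_comm, horth μ hμ ν hν (fun h => hne h.symm), smul_zero]

lemma aux_exp_sum (S : Finset ℝ) (E : ℝ → Matrix (Fin n) (Fin n) ℂ)
    (hidem : ∀ μ ∈ S, E μ * E μ = E μ)
    (horth : ∀ μ ∈ S, ∀ ν ∈ S, μ ≠ ν → E μ * E ν = 0)
    (hone : (∑ μ ∈ S, E μ) = 1) (c : ℝ → ℂ) :
    NormedSpace.exp (∑ μ ∈ S, c μ • E μ) = ∑ μ ∈ S, Complex.exp (c μ) • E μ := by
  letI : SeminormedRing (Matrix (Fin n) (Fin n) ℂ) := Matrix.linftyOpSemiNormedRing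
  letI : NormedRing (Matrix (Fin n) (Fin n) ℂ) := Matrix.linftyOpNormedRing
  letI : NormedAlgebra ℂ (Matrix (Fin n) (Fin n) ℂ) := Matrix.linftyOpNormedAlgebra
  rw [NormedSpace.exp_eq_tsum ℂ]
  have h1 : ∀ k : ℕ, (((k.factorial : ℂ))⁻¹ • (∑ μ ∈ S, c μ • E μ) ^ k)
      = ∑ μ ∈ S, (((k.factorial : ℂ))⁻¹ • (c μ) ^ k) • E μ := by
    intro k
    rw [aux_pow_sum S E hidem horth hone c k, Finset.smul_sum]
    exact Finset.sum_congr rfl fun μ _ => by rw [smul_smul, smul_eq_mul]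
  simp_rw [h1]
  rw [Summable.tsum_finsetSum (fun μ _ => ((NormedSpace.expSeries_summable' (𝕂 := ℂ) (c μ)).smul_const (E μ)))]
  refine Finset.sum_congr rfl fun μ _ => ?_
  rw [Summable.tsum_smul_const (NormedSpace.expSeries_summable' (𝕂 := ℂ) (c μ)),
    Complex.exp_eq_exp_ℂ, NormedSpace.exp_eq_tsum ℂ]

lemma aux_exp_I_eq (a b : ℝ) : Complex.exp (Complex.I * a) = Complex.exp (Complex.I * b) ↔
    ∃ k : ℤ, a = b + 2 * Real.pi * k := by
  rw [Complex.exp_eq_exp_iff_exists_int]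
  constructor
  · rintro ⟨k, h⟩
    refine ⟨k, ?_⟩
    have h2 : (a : ℂ) = (b : ℂ) + 2 * Real.pi * k :=
      mul_left_cancel₀ Complex.I_ne_zero (by rw [h]; push_cast; ring)
    exact_mod_cast h2
  · rintro ⟨k, h⟩
    exact ⟨k, by rw [show (a : ℂ) = (b : ℂ) + 2 * Real.pi * k by exact_mod_cast h]; push_cast; ring⟩

lemma aux_smul_cancel {x : Fin n → ℂ} (hx : x ≠ 0) {a b : ℂ} (h : a • x = b • x) : a = b := by
  have : (a - b) • x = 0 := by rw [sub_smul, h, sub_self]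
  rcases smul_eq_zero.mp this with h' | h'
  · exact sub_eq_zero.mp h'
  · exact absurd h' hx

end Aux

theorem stmt17 {n : ℕ} (M : Matrix (Fin n) (Fin n) ℝ) (hM : M.IsSymm)
    (S : Finset ℝ) (E : ℝ → Matrix (Fin n) (Fin n) ℂ)
    (hSE : IsSpectralDecompOf M S E) (u v : Fin n) (huv : u ≠ v)
    (r : ℕ) (hr : 0 < r) (lam : Fin r → ℝ) (hinj : Function.Injective lam)
    (θ : ℝ) (hθS : θ ∈ S) (hlamS : ∀ j, lam j ∈ S) (hθlam : ∀ j, θ ≠ lam j)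
    -- σ_u⁺(M) = {lam 1, ..., lam r}
    (hplus : ∀ j, E (lam j) *ᵥ Pi.single u 1 = E (lam j) *ᵥ Pi.single v 1 ∧
      E (lam j) *ᵥ Pi.single u 1 ≠ 0)
    -- σ_u⁻(M) = {θ}
    (hminus : E θ *ᵥ Pi.single u 1 = -(E θ *ᵥ Pi.single v 1) ∧
      E θ *ᵥ Pi.single u 1 ≠ 0)
    (hrest : ∀ mu ∈ S, mu ∉ Set.range lam → mu ≠ θ →
      E mu *ᵥ Pi.single u 1 = 0 ∧ E mu *ᵥ Pi.single v 1 = 0)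
    (τ ζ γ : ℝ) :
    (transU M τ *ᵥ Pi.single u 1 =
        (Complex.exp (Complex.I * ζ) * Real.cos γ) • (Pi.single u 1 : Fin n → ℂ) +
          (Complex.I * Complex.exp (Complex.I * ζ) * Real.sin γ) •
            (Pi.single v 1 : Fin n → ℂ)) ↔
      ((∀ j, ∃ k : ℤ, τ * (lam j - θ) = 2 * γ + 2 * Real.pi * k) ∧
        (∃ k : ℤ, τ * θ = ζ - γ + 2 * Real.pi * k)) := by
  obtain ⟨hherm, horth', hone, hdecomp⟩ := hSE
  have hidem : ∀ μ ∈ S, E μ * E μ = E μ := fun μ hμ => (hherm μ hμ).2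
  set eu : Fin n → ℂ := Pi.single u 1 with heu
  set ev : Fin n → ℂ := Pi.single v 1 with hev
  set α : ℂ := Complex.exp (Complex.I * ζ) * Real.cos γ with hα
  set β : ℂ := Complex.I * Complex.exp (Complex.I * ζ) * Real.sin γ with hβ
  have hab : α + β = Complex.exp (Complex.I * ((ζ + γ : ℝ) : ℂ)) := by
    rw [hα, hβ, show Complex.I * (((ζ + γ : ℝ)) : ℂ) = Complex.I * ζ + (γ : ℂ) * Complex.I by
      push_cast; ring, Complex.exp_add, Complex.exp_mul_I]
    push_cast
    ring
  have hab' : α - β = Complex.exp (Complex.I * ((ζ - γ : ℝ) : ℂ)) := by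
    rw [hα, hβ, show Complex.I * (((ζ - γ : ℝ)) : ℂ) = Complex.I * ζ + ((-γ : ℝ) : ℂ) * Complex.I
      by push_cast; ring, Complex.exp_add, Complex.exp_mul_I]
    push_cast
    rw [Complex.cos_neg, Complex.sin_neg]
    ring
  have hU : transU M τ *ᵥ eu = ∑ μ ∈ S, Complex.exp (Complex.I * ((τ * μ : ℝ) : ℂ)) • (E μ *ᵥ eu) := by
    have h0 : (Complex.I * (τ : ℂ)) • M.map (fun x => (x : ℂ))
        = ∑ μ ∈ S, (Complex.I * ((τ * μ : ℝ) : ℂ)) • E μ := by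
      rw [hdecomp, Finset.smul_sum]
      refine Finset.sum_congr rfl fun μ _ => ?_
      rw [smul_smul]
      push_cast
      ring_nf
    rw [transU, h0, aux_exp_sum S E hidem horth' hone, aux_sum_mulVec]
    exact Finset.sum_congr rfl fun μ _ => by rw [Matrix.smul_mulVec]
  classical
  set c : ℝ → ℂ := fun μ => if μ = θ then α - β else α + β with hc
  have heu_sum : eu = ∑ μ ∈ S, E μ *ᵥ eu := by
    conv_lhs => rw [show eu = (1 : Matrix (Fin n) (Fin n) ℂ) *ᵥ eu from (Matrix.one_mulVec eu).symm]
    rw [← hone, aux_sum_mulVec]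
  have hev_sum : ev = ∑ μ ∈ S, E μ *ᵥ ev := by
    conv_lhs => rw [show ev = (1 : Matrix (Fin n) (Fin n) ℂ) *ᵥ ev from (Matrix.one_mulVec ev).symm]
    rw [← hone, aux_sum_mulVec]
  have hsplit : α • eu + β • ev = ∑ μ ∈ S, (α • (E μ *ᵥ eu) + β • (E μ *ᵥ ev)) := by
    rw [Finset.sum_add_distrib, ← Finset.smul_sum, ← Finset.smul_sum, ← heu_sum, ← hev_sum]
  have hRHS : α • eu + β • ev = ∑ μ ∈ S, c μ • (E μ *ᵥ eu) := by
    rw [hsplit]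
    refine Finset.sum_congr rfl fun μ hμ => ?_
    by_cases hμθ : μ = θ
    · rw [hμθ]
      simp only [hc, if_pos rfl]
      have hneg : E θ *ᵥ ev = -(E θ *ᵥ eu) := by rw [hminus.1, neg_neg]
      rw [hneg]
      module
    · by_cases hμr : μ ∈ Set.range lam
      · obtain ⟨j, rfl⟩ := hμr
        simp only [hc, if_neg hμθ]
        rw [← (hplus j).1, add_smul]
      · rw [(hrest μ hμ hμr hμθ).1, (hrest μ hμ hμr hμθ).2]
        simp
  have hmain : (transU M τ *ᵥ eu = α • eu + β • ev) ↔
      ∀ μ ∈ S, Complex.exp (Complex.I * ((τ * μ : ℝ) : ℂ)) • (E μ *ᵥ eu)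
        = c μ • (E μ *ᵥ eu) := by
    rw [hU, hRHS]
    constructor
    · intro h ν hν
      have h2 := congrArg (fun w => (E ν).mulVecLin w) h
      simp only [map_sum, LinearMap.map_smul, Matrix.mulVecLin_apply,
        Matrix.mulVec_mulVec] at h2
      rw [Finset.sum_eq_single_of_mem ν hν (fun μ hμ hne => by
          rw [horth' ν hν μ hμ (Ne.symm hne), Matrix.zero_mulVec, smul_zero]),
        Finset.sum_eq_single_of_mem ν hν (fun μ hμ hne => by
          rw [horth' ν hν μ hμ (Ne.symm hne), Matrix.zero_mulVec, smul_zero])] at h2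
      rw [hidem ν hν] at h2
      exact h2
    · intro h
      exact Finset.sum_congr rfl h
  have hscal : (∀ μ ∈ S, Complex.exp (Complex.I * ((τ * μ : ℝ) : ℂ)) • (E μ *ᵥ eu)
        = c μ • (E μ *ᵥ eu)) ↔
      ((∀ j, Complex.exp (Complex.I * ((τ * lam j : ℝ) : ℂ)) = α + β) ∧
        Complex.exp (Complex.I * ((τ * θ : ℝ) : ℂ)) = α - β) := by
    constructor
    · intro h
      refine ⟨fun j => ?_, ?_⟩
      · have hj := h (lam j) (hlamS j)
        simp only [hc, if_neg (Ne.symm (hθlam j))] at hj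
        exact aux_smul_cancel (hplus j).2 hj
      · have hθ' := h θ hθS
        simp only [hc, if_pos rfl] at hθ'
        exact aux_smul_cancel hminus.2 hθ'
    · rintro ⟨h1, h2⟩ μ hμ
      by_cases hμθ : μ = θ
      · rw [hμθ]
        simp only [hc, if_pos rfl]
        rw [h2]
      · by_cases hμr : μ ∈ Set.range lam
        · obtain ⟨j, rfl⟩ := hμr
          simp only [hc, if_neg hμθ]
          rw [h1 j]
        · rw [(hrest μ hμ hμr hμθ).1, smul_zero, smul_zero]
  rw [hmain, hscal, hab, hab']
  simp_rw [aux_exp_I_eq]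
  constructor
  · rintro ⟨h1, k0, h0⟩
    refine ⟨fun j => ?_, ⟨k0, by linarith⟩⟩
    obtain ⟨k, hk⟩ := h1 j
    refine ⟨k - k0, ?_⟩
    have e : τ * (lam j - θ) = τ * lam j - τ * θ := by ring
    rw [e]
    push_cast
    linarith
  · rintro ⟨h1, k0, h0⟩
    refine ⟨fun j => ?_, ⟨k0, by linarith⟩⟩
    obtain ⟨k, hk⟩ := h1 j
    refine ⟨k + k0, ?_⟩
    have e : τ * lam j = τ * (lam j - θ) + τ * θ := by ring
    rw [e, hk, h0]
    push_cast
    ring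
end

section
/- Let M be a real symmetric matrix and u, v strongly cospectral indices that exhibit fractional revival at some time τ (U(τ)e_u = αe_u + βe_v with |α|² + |β|² = 1). If σ_u⁺(M) = {λ₁,...,λ_r} with r ≥ 2, then (λ₁ - λ_j)/(λ₁ - λ₂) ∈ ℚ for every j ≥ 2. -/
open Matrix Complex

/-! Each spectral idempotent `E λ` intertwines `U(τ)` with the scalar `exp(iτλ)`. Applying `E λ`
to the revival equation `U(τ) e_u = α e_u + β e_v` and using `E λ e_u = E λ e_v ≠ 0` gives
`exp(iτλ) = α + β` for every `λ ∈ σ_u⁺(M)`. Hence all the `τ (λ₁ - λ_j)` are integer multiples of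
`2π`, and their ratios are rational. -/

theorem NormedSpace.mul_exp_of_mul_eq_smul {𝕂 𝔸 : Type*} [RCLike 𝕂] [NormedRing 𝔸]
    [NormedAlgebra 𝕂 𝔸] [CompleteSpace 𝔸] {A B : 𝔸} {c : 𝕂} (h : B * A = c • B) :
    B * NormedSpace.exp A = NormedSpace.exp c • B := by
  have hpow : ∀ k : ℕ, B * A ^ k = c ^ k • B := by
    intro k
    induction k with
    | zero => simp
    | succ k ih => rw [pow_succ, ← mul_assoc, ih, smul_mul_assoc, h, smul_smul, ← pow_succ]
  have hB := ((NormedSpace.exp_series_hasSum_exp' (𝕂 := 𝕂) A).mul_left B)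
  have hc := (NormedSpace.exp_series_hasSum_exp' (𝕂 := 𝕂) c).smul_const B
  refine hB.unique (hc.congr_fun fun k => ?_)
  rw [mul_smul_comm, hpow, smul_smul, smul_eq_mul]

theorem Matrix.mul_exp_of_mul_eq_smul {m : Type*} [Fintype m] [DecidableEq m]
    {A B : Matrix m m ℂ} {c : ℂ} (h : B * A = c • B) :
    B * NormedSpace.exp A = Complex.exp c • B := by
  let : NormedRing (Matrix m m ℂ) := Matrix.linftyOpNormedRing
  let : NormedAlgebra ℂ (Matrix m m ℂ) := Matrix.linftyOpNormedAlgebra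
  rw [Complex.exp_eq_exp_ℂ]
  exact NormedSpace.mul_exp_of_mul_eq_smul h

namespace IsSpectralDecompOf

variable {n : ℕ} {M : Matrix (Fin n) (Fin n) ℝ} {S : Finset ℝ} {E : ℝ → Matrix (Fin n) (Fin n) ℂ}

theorem proj_mul_eq_smul (h : IsSpectralDecompOf M S E) {μ : ℝ} (hμ : μ ∈ S) :
    E μ * M.map (fun x => (x : ℂ)) = (μ : ℂ) • E μ := by
  obtain ⟨hproj, horth, -, hdecomp⟩ := h
  rw [hdecomp, Finset.mul_sum, Finset.sum_eq_single μ]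
  · rw [mul_smul_comm, (hproj μ hμ).2]
  · intro ν hν hne
    rw [mul_smul_comm, horth μ hμ ν hν hne.symm, smul_zero]
  · exact fun hμ' => (hμ' hμ).elim

theorem proj_mul_transU (h : IsSpectralDecompOf M S E) {μ : ℝ} (hμ : μ ∈ S) (t : ℝ) :
    E μ * transU M t = Complex.exp (↑(t * μ) * Complex.I) • E μ := by
  refine Matrix.mul_exp_of_mul_eq_smul ?_
  rw [mul_smul_comm, h.proj_mul_eq_smul hμ, smul_smul]
  push_cast
  ring_nf

end IsSpectralDecompOf

theorem Matrix.eq_add_of_mul_eq_smul_of_mulVec_eq {K m : Type*} [Field K] [Fintype m]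
    {P U : Matrix m m K} {z α β : K} {x y : m → K} (hPU : P * U = z • P)
    (hU : U *ᵥ x = α • x + β • y) (hxy : P *ᵥ x = P *ᵥ y) (hx : P *ᵥ x ≠ 0) :
    z = α + β := by
  have h : z • (P *ᵥ x) = (α + β) • (P *ᵥ x) := by
    rw [← smul_mulVec, ← hPU, ← mulVec_mulVec, hU, mulVec_add, mulVec_smul, mulVec_smul, ← hxy,
      add_smul]
  exact smul_left_injective K hx h

theorem Complex.exists_int_sub_eq_of_exp_mul_I_eq {x y : ℝ}
    (h : exp (x * I) = exp (y * I)) : ∃ k : ℤ, x - y = k * (2 * Real.pi) := by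
  obtain ⟨k, hk⟩ := exp_eq_exp_iff_exists_int.mp h
  have him : x = y + k * (2 * Real.pi) := by simpa using congrArg im hk
  exact ⟨k, by linarith⟩

theorem exists_rat_eq_mul_of_mul_eq_int_mul {t c x y : ℝ} {k m : ℤ} (ht : t ≠ 0) (hy : y ≠ 0)
    (hxc : t * x = k * c) (hyc : t * y = m * c) : ∃ q : ℚ, x = q * y := by
  have hm : (m : ℝ) ≠ 0 := by
    intro hm
    rw [hm, zero_mul] at hyc
    exact mul_ne_zero ht hy hyc
  refine ⟨k / m, ?_⟩
  have : t * (x * m) = t * (k * y) := by linear_combination (m : ℝ) * hxc - (k : ℝ) * hyc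
  push_cast
  field_simp
  linarith [mul_left_cancel₀ ht this]

theorem stmt18 {n : ℕ} (M : Matrix (Fin n) (Fin n) ℝ)
    (S : Finset ℝ) (E : ℝ → Matrix (Fin n) (Fin n) ℂ)
    (hSE : IsSpectralDecompOf M S E) (u v : Fin n)
    (r : ℕ) (hr : 2 ≤ r) (lam : Fin r → ℝ) (hinj : Function.Injective lam)
    (hlamS : ∀ j, lam j ∈ S)
    -- σ_u⁺(M) ⊇ {lam 1, ..., lam r}
    (hplus : ∀ j, E (lam j) *ᵥ Pi.single u 1 = E (lam j) *ᵥ Pi.single v 1 ∧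
      E (lam j) *ᵥ Pi.single u 1 ≠ 0)
    -- fractional revival at time τ > 0
    (τ : ℝ) (hτ : 0 < τ)
    (hFR : ∃ α β : ℂ,
      ‖α‖ ^ 2 + ‖β‖ ^ 2 = 1 ∧
      transU M τ *ᵥ Pi.single u 1 =
        α • (Pi.single u 1 : Fin n → ℂ) + β • (Pi.single v 1 : Fin n → ℂ)) :
    ∀ j : Fin r, ∃ q : ℚ,
      lam ⟨0, by omega⟩ - lam j =
        (q : ℝ) * (lam ⟨0, by omega⟩ - lam ⟨1, by omega⟩) := by
  obtain ⟨α, β, -, hU⟩ := hFR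
  have hphase : ∀ j, Complex.exp (↑(τ * lam j) * Complex.I) = α + β := fun j =>
    Matrix.eq_add_of_mul_eq_smul_of_mulVec_eq (hSE.proj_mul_transU (hlamS j) τ) hU
      (hplus j).1 (hplus j).2
  have hperiod : ∀ i j, ∃ k : ℤ, τ * (lam i - lam j) = k * (2 * Real.pi) := fun i j => by
    rw [mul_sub]
    exact Complex.exists_int_sub_eq_of_exp_mul_I_eq ((hphase i).trans (hphase j).symm)
  have h01 : lam ⟨0, by omega⟩ - lam ⟨1, by omega⟩ ≠ 0 :=
    sub_ne_zero.mpr (hinj.ne (by simp [Fin.ext_iff]))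
  intro j
  obtain ⟨k, hk⟩ := hperiod ⟨0, by omega⟩ j
  obtain ⟨m, hm⟩ := hperiod ⟨0, by omega⟩ ⟨1, by omega⟩
  exact exists_rat_eq_mul_of_mul_eq_int_mul hτ.ne' h01 hk hm
end
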